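/- For real numbers r, s, t with r+s+t > 2, r+t > 1, s+t > 1, and for any x > 0, one has Θ(r,s,t,x) = Θ(r-1, s, t+1, x) + x · Θ(r, s-1, t+1, x). -/

import Mathlib

open Real

noncomputable def Theta (r s t x : ℝ) : ℝ :=
  ∑' n : ℕ, ∑' m : ℕ,
    1 / (((n : ℝ) + 1) ^ r * ((m : ℝ) + 1) ^ s * (((n : ℝ) + 1) + ((m : ℝ) + 1) * x) ^ t)

/-!
With `D = n + m x`, termwise `1 / D^t = n / D^(t+1) + x m / D^(t+1)`; the hypotheses make all
three double series absolutely summable, so the sums may be split. Summability follows by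
comparison with `n^(-a) m^(-b)`, `a, b > 1`: for `t > 0` bound `(n + m x)^t ≥ n^u (m x)^(t-u)`
with a suitable `u ∈ [0, t]`, and for `t ≤ 0` use `n + m x ≤ (1 + x) n m`.
-/

noncomputable def thetaTerm (r s t x : ℝ) (i : ℕ × ℕ) : ℝ :=
  1 / (((i.1 : ℝ) + 1) ^ r * ((i.2 : ℝ) + 1) ^ s * (((i.1 : ℝ) + 1) + ((i.2 : ℝ) + 1) * x) ^ t)

lemma thetaTerm_eq_add {r s t x : ℝ} (hx : 0 ≤ x) (i : ℕ × ℕ) :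
    thetaTerm r s t x i = thetaTerm (r - 1) s (t + 1) x i + x * thetaTerm r (s - 1) (t + 1) x i := by
  have hN : (0 : ℝ) < (i.1 : ℝ) + 1 := by positivity
  have hM : (0 : ℝ) < (i.2 : ℝ) + 1 := by positivity
  have hD : (0 : ℝ) < ((i.1 : ℝ) + 1) + ((i.2 : ℝ) + 1) * x := by positivity
  simp only [thetaTerm, rpow_sub hN, rpow_sub hM, rpow_add hD, rpow_one]
  have := (rpow_pos_of_pos hN r).ne'
  have := (rpow_pos_of_pos hM s).ne'
  have := (rpow_pos_of_pos hD t).ne'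
  field_simp

lemma rpow_mul_rpow_sub_le_add_rpow {a b u T : ℝ} (ha : 0 ≤ a) (hb : 0 ≤ b) (hu : 0 ≤ u)
    (huT : u ≤ T) : a ^ u * b ^ (T - u) ≤ (a + b) ^ T := by
  calc a ^ u * b ^ (T - u) ≤ (a + b) ^ u * (a + b) ^ (T - u) := by
        gcongr <;> linarith
    _ = (a + b) ^ T := by
        rw [← rpow_add_of_nonneg (by positivity) hu (by linarith), add_sub_cancel]

lemma add_mul_le_one_add_mul_mul {N M x : ℝ} (hN : 1 ≤ N) (hM : 1 ≤ M) (hx : 0 ≤ x) :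
    N + M * x ≤ (1 + x) * N * M := by
  nlinarith [mul_nonneg (sub_nonneg.2 hM) (by linarith : (0 : ℝ) ≤ N),
    mul_nonneg (mul_nonneg (sub_nonneg.2 hN) (by linarith : (0 : ℝ) ≤ M)) hx]

lemma exists_rpow_mul_rpow_le {r s t x : ℝ} (hrst : 2 < r + s + t) (hrt : 1 < r + t)
    (hst : 1 < s + t) (hx : 0 < x) :
    ∃ a b c : ℝ, 1 < a ∧ 1 < b ∧ 0 < c ∧ ∀ N M : ℝ, 1 ≤ N → 1 ≤ M →
      c * N ^ a * M ^ b ≤ N ^ r * M ^ s * (N + M * x) ^ t := by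
  rcases le_or_gt t 0 with ht | ht
  · refine ⟨r + t, s + t, (1 + x) ^ t, hrt, hst, by positivity, fun N M hN hM => ?_⟩
    have hN0 : 0 < N := by linarith
    have hM0 : 0 < M := by linarith
    calc (1 + x) ^ t * N ^ (r + t) * M ^ (s + t) = N ^ r * M ^ s * ((1 + x) * N * M) ^ t := by
          rw [rpow_add hN0, rpow_add hM0, mul_rpow (by positivity) hM0.le,
            mul_rpow (by positivity) hN0.le]
          ring
      _ ≤ N ^ r * M ^ s * (N + M * x) ^ t := by
          have := rpow_le_rpow_of_nonpos (by positivity) (add_mul_le_one_add_mul_mul hN hM hx.le) ht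
          gcongr
  · have hlt : max 0 (1 - r) < min t (t - 1 + s) := by
      apply max_lt <;> apply lt_min <;> linarith
    obtain ⟨u, hu₀, hu₁⟩ := exists_between hlt
    simp only [max_lt_iff, lt_min_iff] at hu₀ hu₁
    refine ⟨r + u, s + (t - u), x ^ (t - u), by linarith, by linarith, by positivity,
      fun N M hN hM => ?_⟩
    have hN0 : 0 < N := by linarith
    have hM0 : 0 < M := by linarith
    calc x ^ (t - u) * N ^ (r + u) * M ^ (s + (t - u))
        = N ^ r * M ^ s * (N ^ u * (M * x) ^ (t - u)) := by
          rw [rpow_add hN0, rpow_add hM0, mul_rpow hM0.le hx.le]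
          ring
      _ ≤ N ^ r * M ^ s * (N + M * x) ^ t := by
          gcongr
          exact rpow_mul_rpow_sub_le_add_rpow hN0.le (by positivity) hu₀.1.le hu₁.1.le

lemma summable_one_div_nat_add_one_rpow {p : ℝ} (hp : 1 < p) :
    Summable fun n : ℕ => 1 / ((n : ℝ) + 1) ^ p := by
  simpa using (summable_nat_add_iff 1).mpr (summable_one_div_nat_rpow.mpr hp)

lemma summable_thetaTerm {r s t x : ℝ} (hrst : 2 < r + s + t) (hrt : 1 < r + t)
    (hst : 1 < s + t) (hx : 0 < x) : Summable (thetaTerm r s t x) := by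
  obtain ⟨a, b, c, ha, hb, hc, hle⟩ := exists_rpow_mul_rpow_le hrst hrt hst hx
  have hprod : Summable fun i : ℕ × ℕ =>
      c⁻¹ * (1 / ((i.1 : ℝ) + 1) ^ a * (1 / ((i.2 : ℝ) + 1) ^ b)) :=
    ((summable_one_div_nat_add_one_rpow ha).mul_of_nonneg
      (summable_one_div_nat_add_one_rpow hb) (fun _ => by positivity)
      (fun _ => by positivity)).mul_left _
  refine hprod.of_nonneg_of_le (fun i => by unfold thetaTerm; positivity) fun i => ?_
  have hN : (1 : ℝ) ≤ (i.1 : ℝ) + 1 := by simp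
  have hM : (1 : ℝ) ≤ (i.2 : ℝ) + 1 := by simp
  calc thetaTerm r s t x i ≤ 1 / (c * ((i.1 : ℝ) + 1) ^ a * ((i.2 : ℝ) + 1) ^ b) :=
        one_div_le_one_div_of_le (by positivity) (hle _ _ hN hM)
    _ = c⁻¹ * (1 / ((i.1 : ℝ) + 1) ^ a * (1 / ((i.2 : ℝ) + 1) ^ b)) := by
        field_simp

lemma Theta_eq_tsum_thetaTerm {r s t x : ℝ} (h : Summable (thetaTerm r s t x)) :
    Theta r s t x = ∑' i, thetaTerm r s t x i :=
  h.tsum_prod.symm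

theorem theta_split (r s t : ℝ) (h1 : 2 < r + s + t) (h2 : 1 < r + t) (h3 : 1 < s + t)
    (x : ℝ) (hx : 0 < x) :
    Theta r s t x = Theta (r - 1) s (t + 1) x + x * Theta r (s - 1) (t + 1) x := by
  have hA := summable_thetaTerm (r := r - 1) (s := s) (t := t + 1) (by linarith) (by linarith)
    (by linarith) hx
  have hB := summable_thetaTerm (r := r) (s := s - 1) (t := t + 1) (by linarith) (by linarith)
    (by linarith) hx
  calc Theta r s t x = ∑' i, thetaTerm r s t x i :=
        Theta_eq_tsum_thetaTerm (summable_thetaTerm h1 h2 h3 hx)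
    _ = ∑' i, (thetaTerm (r - 1) s (t + 1) x i + x * thetaTerm r (s - 1) (t + 1) x i) :=
        tsum_congr (thetaTerm_eq_add hx.le)
    _ = Theta (r - 1) s (t + 1) x + x * Theta r (s - 1) (t + 1) x := by
        rw [hA.tsum_add (hB.mul_left x), tsum_mul_left, Theta_eq_tsum_thetaTerm hA,
          Theta_eq_tsum_thetaTerm hB]
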